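/- HSIC equals the squared MMD between the joint distribution and the product of marginals under the product kernel: HSIC(P_XY) = MMD²(P_XY, P_X ⊗ P_Y; k) where k((x,y),(x',y')) = κ_X(x,x')κ_Y(y,y'). Consequently HSIC(P_XY) ≥ 0. -/

import Mathlib

open MeasureTheory Function

section helpers

variable {G : Type*} [MeasurableSpace G]

lemma my_integrable_of_bdd {μ : Measure G} [IsFiniteMeasure μ] {f : G → ℝ} {C : ℝ}
    (hf : AEStronglyMeasurable f μ) (hC : ∀ z, |f z| ≤ C) : Integrable f μ :=
  (integrable_const C).mono' hf (Filter.Eventually.of_forall (by simpa [Real.norm_eq_abs] using hC))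

lemma my_map_pi_eval (μ : Measure G) [IsProbabilityMeasure μ] {n : ℕ} (i : Fin n) :
    (Measure.pi fun _ : Fin n => μ).map (fun x => x i) = μ := by
  ext s hs
  rw [Measure.map_apply (measurable_pi_apply i) hs]
  have hpre : (fun x : Fin n → G => x i) ⁻¹' s
      = Set.pi Set.univ (fun l => if l = i then s else Set.univ) := by
    ext x
    simp only [Set.mem_preimage, Set.mem_pi, Set.mem_univ, forall_true_left]
    constructor
    · intro hx l; split_ifs with h
      · subst h; exact hx
      · trivial
    · intro h; simpa using h i
  rw [hpre, Measure.pi_pi]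
  have h1 : ∀ l : Fin n, μ (if l = i then s else Set.univ) = if l = i then μ s else 1 := by
    intro l; split_ifs <;> simp
  simp_rw [h1]
  rw [Finset.prod_ite_eq' Finset.univ i (fun _ => μ s)]
  simp

lemma my_map_pi_pair (μ : Measure G) [IsProbabilityMeasure μ] {n : ℕ} {i j : Fin n}
    (hij : i ≠ j) :
    (Measure.pi fun _ : Fin n => μ).map (fun x => (x i, x j)) = μ.prod μ := by
  refine (Measure.prod_eq fun s t hs ht => ?_).symm
  rw [Measure.map_apply ((measurable_pi_apply i).prodMk (measurable_pi_apply j)) (hs.prod ht)]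
  have hpre : (fun x : Fin n → G => (x i, x j)) ⁻¹' (s ×ˢ t)
      = Set.pi Set.univ (fun l => if l = i then s else if l = j then t else Set.univ) := by
    ext x
    simp only [Set.mem_preimage, Set.mem_prod, Set.mem_pi, Set.mem_univ, forall_true_left]
    constructor
    · rintro ⟨hx1, hx2⟩ l
      split_ifs with h h'
      · subst h; exact hx1
      · subst h'; exact hx2
      · trivial
    · intro h
      refine ⟨?_, ?_⟩
      · simpa using h i
      · have := h j
        simp only [if_neg hij.symm, if_pos rfl] at this
        exact this
  rw [hpre, Measure.pi_pi]
  have h1 : ∀ l : Fin n, μ (if l = i then s else if l = j then t else Set.univ)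
      = (if l = i then μ s else 1) * (if l = j then μ t else 1) := by
    intro l
    rcases eq_or_ne l i with rfl | hli
    · simp [if_neg hij]
    · rcases eq_or_ne l j with rfl | hlj
      · simp [if_neg hli]
      · simp [if_neg hli, if_neg hlj]
  simp_rw [h1]
  rw [Finset.prod_mul_distrib, Finset.prod_ite_eq' Finset.univ i (fun _ => μ s),
    Finset.prod_ite_eq' Finset.univ j (fun _ => μ t)]
  simp

end helpers


lemma my_pointwise_pd {G : Type*} (k : G → G → ℝ) (hsym : ∀ z w, k z w = k w z)
    (hpd : ∀ (m : ℕ) (u : Fin m → G) (c : Fin m → ℝ),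
      0 ≤ ∑ i : Fin m, ∑ j : Fin m, c i * c j * k (u i) (u j))
    (n : ℕ) (x y : Fin n → G) :
    2 * ∑ i : Fin n, ∑ j : Fin n, k (x i) (y j)
      ≤ (∑ i : Fin n, ∑ j : Fin n, k (x i) (x j))
        + ∑ i : Fin n, ∑ j : Fin n, k (y i) (y j) := by
  have h := hpd (n + n) (Fin.append x y) (Fin.append (fun _ => (1 : ℝ)) fun _ => (-1 : ℝ))
  simp only [Fin.sum_univ_add, Fin.append_left, Fin.append_right, one_mul, mul_one,
    neg_mul, mul_neg, neg_neg, Finset.sum_add_distrib, Finset.sum_neg_distrib] at h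
  have hswap : ∑ i : Fin n, ∑ j : Fin n, k (y i) (x j)
      = ∑ i : Fin n, ∑ j : Fin n, k (x i) (y j) := by
    rw [Finset.sum_comm]
    simp_rw [fun i j => hsym (y j) (x i)]
  linarith

lemma my_prod_pd {E F : Type*} (κX : E → E → ℝ) (κY : F → F → ℝ)
    (hκY_symm : ∀ y y', κY y y' = κY y' y)
    (hκX_pd : ∀ (m : ℕ) (x : Fin m → E) (c : Fin m → ℝ),
      0 ≤ ∑ i : Fin m, ∑ j : Fin m, c i * c j * κX (x i) (x j))
    (hκY_pd : ∀ (m : ℕ) (y : Fin m → F) (c : Fin m → ℝ),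
      0 ≤ ∑ i : Fin m, ∑ j : Fin m, c i * c j * κY (y i) (y j))
    (m : ℕ) (u : Fin m → E × F) (c : Fin m → ℝ) :
    0 ≤ ∑ i : Fin m, ∑ j : Fin m, c i * c j * (κX (u i).1 (u j).1 * κY (u i).2 (u j).2) := by
  classical
  set L : Matrix (Fin m) (Fin m) ℝ := Matrix.of fun i j => κY (u i).2 (u j).2 with hL
  have hLpsd : L.PosSemidef := by
    refine Matrix.PosSemidef.of_dotProduct_mulVec_nonneg ?_ ?_
    · ext i j
      simp [L, Matrix.conjTranspose_apply, hκY_symm]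
    · intro v
      have := hκY_pd m (fun i => (u i).2) v
      simp only [dotProduct, Matrix.mulVec, dotProduct, star_trivial]
      refine this.trans_eq (Eq.symm ?_)
      rw [Finset.sum_congr rfl]
      intro i _
      rw [Finset.mul_sum, Finset.sum_congr rfl]
      intro j _
      simp [L]; ring
  obtain ⟨S, hS⟩ : ∃ S : Matrix (Fin m) (Fin m) ℝ, S * S = L ∧ S.IsHermitian :=
    open scoped MatrixOrder in
    ⟨CFC.sqrt L, CFC.sqrt_mul_sqrt_self L hLpsd.nonneg, (Matrix.nonneg_iff_posSemidef.mp (CFC.sqrt_nonneg L)).1⟩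
  obtain ⟨hSS, hSh⟩ := hS
  have hLentry : ∀ i j, L i j = ∑ r : Fin m, S r i * S r j := by
    intro i j
    rw [← hSS, Matrix.mul_apply]
    refine Finset.sum_congr rfl fun r _ => ?_
    congr 1
    exact (Matrix.IsHermitian.apply hSh i r).symm
  calc (0:ℝ) ≤ ∑ r : Fin m, ∑ i : Fin m, ∑ j : Fin m,
        (c i * S r i) * (c j * S r j) * κX (u i).1 (u j).1 := by
        refine Finset.sum_nonneg fun r _ => ?_
        exact hκX_pd m (fun i => (u i).1) (fun i => c i * S r i)
    _ = ∑ i : Fin m, ∑ j : Fin m, c i * c j * (κX (u i).1 (u j).1 * κY (u i).2 (u j).2) := by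
        rw [Finset.sum_comm]
        refine Finset.sum_congr rfl fun i _ => ?_
        rw [Finset.sum_comm]
        refine Finset.sum_congr rfl fun j _ => ?_
        have : κY (u i).2 (u j).2 = ∑ r : Fin m, S r i * S r j := hLentry i j
        rw [this, Finset.mul_sum, Finset.mul_sum]
        refine Finset.sum_congr rfl fun r _ => ?_
        ring

lemma my_key {G : Type*} [MeasurableSpace G] (k : G → G → ℝ)
    (hk : Measurable (uncurry k)) (C : ℝ)
    (hC : ∀ z w, |k z w| ≤ C) (hsym : ∀ z w, k z w = k w z)
    (hpd : ∀ (m : ℕ) (u : Fin m → G) (c : Fin m → ℝ),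
      0 ≤ ∑ i : Fin m, ∑ j : Fin m, c i * c j * k (u i) (u j))
    (μ ρ : Measure G) [IsProbabilityMeasure μ] [IsProbabilityMeasure ρ] :
    2 * (∫ z, ∫ w, k z w ∂ρ ∂μ)
      ≤ (∫ z, ∫ w, k z w ∂μ ∂μ) + ∫ z, ∫ w, k z w ∂ρ ∂ρ := by
  classical
  have hk' : Measurable fun p : G × G => k p.1 p.2 := hk
  -- integrability over products of probability measures
  have hint : ∀ (σ τ : Measure G) [IsProbabilityMeasure σ] [IsProbabilityMeasure τ],
      Integrable (fun p : G × G => k p.1 p.2) (σ.prod τ) := by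
    intro σ τ _ _
    exact my_integrable_of_bdd hk'.aestronglyMeasurable (fun z => hC z.1 z.2)
  -- double integrals as product integrals
  have hJ : ∀ (σ τ : Measure G) [IsProbabilityMeasure σ] [IsProbabilityMeasure τ],
      (∫ p : G × G, k p.1 p.2 ∂(σ.prod τ)) = ∫ z, ∫ w, k z w ∂τ ∂σ := by
    intro σ τ _ _
    exact integral_prod _ (hint σ τ)
  set A := ∫ z, ∫ w, k z w ∂μ ∂μ with hA
  set B := ∫ z, ∫ w, k z w ∂ρ ∂ρ with hB
  set D := ∫ z, ∫ w, k z w ∂ρ ∂μ with hD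
  set d₁ := ∫ z, k z z ∂μ with hd₁
  set d₂ := ∫ z, k z z ∂ρ with hd₂
  -- nonemptiness and C ≥ 0
  have hGne : Nonempty G := by
    by_contra h
    rw [not_nonempty_iff] at h
    have h1 := measure_univ (μ := μ)
    rw [Set.univ_eq_empty_iff.mpr h, measure_empty] at h1
    exact zero_ne_one h1
  have hC0 : 0 ≤ C := by
    obtain ⟨z⟩ := hGne
    exact (abs_nonneg _).trans (hC z z)
  -- bounds on the quantities
  have habs : ∀ (σ τ : Measure G) [IsProbabilityMeasure σ] [IsProbabilityMeasure τ],
      |∫ z, ∫ w, k z w ∂τ ∂σ| ≤ C := by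
    intro σ τ _ _
    have h1 : ∀ z, |∫ w, k z w ∂τ| ≤ C := by
      intro z
      calc |∫ w, k z w ∂τ| = ‖∫ w, k z w ∂τ‖ := (Real.norm_eq_abs _).symm
        _ ≤ C * (τ Set.univ).toReal := by
            refine norm_integral_le_of_norm_le_const (Filter.Eventually.of_forall fun w => ?_)
            simpa [Real.norm_eq_abs] using hC z w
        _ = C := by simp
    calc |∫ z, ∫ w, k z w ∂τ ∂σ| = ‖∫ z, ∫ w, k z w ∂τ ∂σ‖ := (Real.norm_eq_abs _).symm
      _ ≤ C * (σ Set.univ).toReal := by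
          refine norm_integral_le_of_norm_le_const (Filter.Eventually.of_forall fun z => ?_)
          simpa [Real.norm_eq_abs] using h1 z
      _ = C := by simp
  have hdabs : ∀ (σ : Measure G) [IsProbabilityMeasure σ], |∫ z, k z z ∂σ| ≤ C := by
    intro σ _
    calc |∫ z, k z z ∂σ| = ‖∫ z, k z z ∂σ‖ := (Real.norm_eq_abs _).symm
      _ ≤ C * (σ Set.univ).toReal := by
          refine norm_integral_le_of_norm_le_const (Filter.Eventually.of_forall fun z => ?_)
          simpa [Real.norm_eq_abs] using hC z z
      _ = C := by simp
  have habsA : |A| ≤ C := habs μ μ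
  have habsB : |B| ≤ C := habs ρ ρ
  have habsd₁ : |d₁| ≤ C := hdabs μ
  have habsd₂ : |d₂| ≤ C := hdabs ρ
  -- the per-n inequality
  have main : ∀ n : ℕ, 2 * ((n : ℝ) * n) * D
      ≤ ((n : ℝ) * d₁ + (n : ℝ) * ((n : ℝ) - 1) * A)
        + ((n : ℝ) * d₂ + (n : ℝ) * ((n : ℝ) - 1) * B) := by
    intro n
    set Pμ : Measure (Fin n → G) := Measure.pi fun _ => μ with hPμ
    set Pρ : Measure (Fin n → G) := Measure.pi fun _ => ρ with hPρ
    set P : Measure ((Fin n → G) × (Fin n → G)) := Pμ.prod Pρ with hP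
    have : IsProbabilityMeasure Pμ := by infer_instance
    have : IsProbabilityMeasure Pρ := by infer_instance
    have : IsProbabilityMeasure P := by infer_instance
    -- measurability of coordinate functions
    have hpair1 : ∀ i j : Fin n, Measurable fun z : (Fin n → G) × (Fin n → G) => (z.1 i, z.1 j) :=
      fun i j => ((measurable_pi_apply i).comp' measurable_fst).prodMk
        ((measurable_pi_apply j).comp' measurable_fst)
    have hpair2 : ∀ i j : Fin n, Measurable fun z : (Fin n → G) × (Fin n → G) => (z.2 i, z.2 j) :=
      fun i j => ((measurable_pi_apply i).comp' measurable_snd).prodMk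
        ((measurable_pi_apply j).comp' measurable_snd)
    have hpair3 : ∀ i j : Fin n, Measurable fun z : (Fin n → G) × (Fin n → G) => (z.1 i, z.2 j) :=
      fun i j => ((measurable_pi_apply i).comp' measurable_fst).prodMk
        ((measurable_pi_apply j).comp' measurable_snd)
    have hm1 : ∀ i j : Fin n, Measurable fun z : (Fin n → G) × (Fin n → G) => k (z.1 i) (z.1 j) :=
      fun i j => by have h := hk'.comp (hpair1 i j); exact h
    have hm2 : ∀ i j : Fin n, Measurable fun z : (Fin n → G) × (Fin n → G) => k (z.2 i) (z.2 j) :=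
      fun i j => by have h := hk'.comp (hpair2 i j); exact h
    have hm3 : ∀ i j : Fin n, Measurable fun z : (Fin n → G) × (Fin n → G) => k (z.1 i) (z.2 j) :=
      fun i j => by have h := hk'.comp (hpair3 i j); exact h
    have hi1 : ∀ i j : Fin n, Integrable (fun z : (Fin n → G) × (Fin n → G) => k (z.1 i) (z.1 j)) P :=
      fun i j => my_integrable_of_bdd (hm1 i j).aestronglyMeasurable (fun z => hC _ _)
    have hi2 : ∀ i j : Fin n, Integrable (fun z : (Fin n → G) × (Fin n → G) => k (z.2 i) (z.2 j)) P :=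
      fun i j => my_integrable_of_bdd (hm2 i j).aestronglyMeasurable (fun z => hC _ _)
    have hi3 : ∀ i j : Fin n, Integrable (fun z : (Fin n → G) × (Fin n → G) => k (z.1 i) (z.2 j)) P :=
      fun i j => my_integrable_of_bdd (hm3 i j).aestronglyMeasurable (fun z => hC _ _)
    -- integral identities
    have hmapfst : P.map Prod.fst = Pμ := by
      rw [hP, Measure.map_fst_prod]; simp
    have hmapsnd : P.map Prod.snd = Pρ := by
      rw [hP, Measure.map_snd_prod]; simp
    -- value of each term
    have hval1 : ∀ i j : Fin n, (∫ z, k (z.1 i) (z.1 j) ∂P) = if i = j then d₁ else A := by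
      intro i j
      have h0 : (∫ z, k (z.1 i) (z.1 j) ∂P) = ∫ x, k (x i) (x j) ∂Pμ := by
        rw [← hmapfst, integral_map measurable_fst.aemeasurable]
        have hg : Measurable fun x : Fin n → G => (x i, x j) :=
          (measurable_pi_apply i).prodMk (measurable_pi_apply j)
        have h := hk'.comp hg
        exact h.aestronglyMeasurable
      rw [h0]
      split_ifs with h
      · subst h
        have h1 : (∫ x, k (x i) (x i) ∂Pμ) = ∫ z, k z z ∂(Pμ.map fun x => x i) := by
          rw [integral_map (measurable_pi_apply i).aemeasurable]
          have hg : Measurable fun z : G => (z, z) := measurable_id.prodMk measurable_id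
          have h := hk'.comp hg
          exact h.aestronglyMeasurable
        rw [h1, hPμ, my_map_pi_eval μ i]
      · have h1 : (∫ x, k (x i) (x j) ∂Pμ)
            = ∫ p : G × G, k p.1 p.2 ∂(Pμ.map fun x => (x i, x j)) := by
          rw [integral_map ((measurable_pi_apply i).prodMk (measurable_pi_apply j)).aemeasurable]
          exact hk'.aestronglyMeasurable
        rw [h1, hPμ, my_map_pi_pair μ h, hJ μ μ]
    have hval2 : ∀ i j : Fin n, (∫ z, k (z.2 i) (z.2 j) ∂P) = if i = j then d₂ else B := by
      intro i j
      have h0 : (∫ z, k (z.2 i) (z.2 j) ∂P) = ∫ x, k (x i) (x j) ∂Pρ := by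
        rw [← hmapsnd, integral_map measurable_snd.aemeasurable]
        have hg : Measurable fun x : Fin n → G => (x i, x j) :=
          (measurable_pi_apply i).prodMk (measurable_pi_apply j)
        have h := hk'.comp hg
        exact h.aestronglyMeasurable
      rw [h0]
      split_ifs with h
      · subst h
        have h1 : (∫ x, k (x i) (x i) ∂Pρ) = ∫ z, k z z ∂(Pρ.map fun x => x i) := by
          rw [integral_map (measurable_pi_apply i).aemeasurable]
          have hg : Measurable fun z : G => (z, z) := measurable_id.prodMk measurable_id
          have h := hk'.comp hg
          exact h.aestronglyMeasurable
        rw [h1, hPρ, my_map_pi_eval ρ i]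
      · have h1 : (∫ x, k (x i) (x j) ∂Pρ)
            = ∫ p : G × G, k p.1 p.2 ∂(Pρ.map fun x => (x i, x j)) := by
          rw [integral_map ((measurable_pi_apply i).prodMk (measurable_pi_apply j)).aemeasurable]
          exact hk'.aestronglyMeasurable
        rw [h1, hPρ, my_map_pi_pair ρ h, hJ ρ ρ]
    have hval3 : ∀ i j : Fin n, (∫ z, k (z.1 i) (z.2 j) ∂P) = D := by
      intro i j
      have hmap : P.map (Prod.map (fun x : Fin n → G => x i) (fun y : Fin n → G => y j))
          = μ.prod ρ := by
        rw [hP, ← Measure.map_prod_map _ _ (measurable_pi_apply i) (measurable_pi_apply j),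
          hPμ, hPρ, my_map_pi_eval μ i, my_map_pi_eval ρ j]
      have h1 : (∫ p : G × G, k p.1 p.2 ∂(P.map (Prod.map (fun x : Fin n → G => x i)
          (fun y : Fin n → G => y j)))) = ∫ z, k (z.1 i) (z.2 j) ∂P := by
        rw [integral_map (((measurable_pi_apply i).prodMap
          (measurable_pi_apply j)).aemeasurable) hk'.aestronglyMeasurable]
        rfl
      rw [← h1, hmap, hJ μ ρ]
    -- integrated positivity
    have hpos : 0 ≤ ∫ z, ((∑ i : Fin n, ∑ j : Fin n, k (z.1 i) (z.1 j))
        + (∑ i : Fin n, ∑ j : Fin n, k (z.2 i) (z.2 j))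
        - 2 * ∑ i : Fin n, ∑ j : Fin n, k (z.1 i) (z.2 j)) ∂P := by
      refine integral_nonneg fun z => ?_
      show (0:ℝ) ≤ _
      have := my_pointwise_pd k hsym hpd n z.1 z.2
      linarith
    have hint1 : Integrable (fun z : (Fin n → G) × (Fin n → G) =>
        ∑ i : Fin n, ∑ j : Fin n, k (z.1 i) (z.1 j)) P :=
      integrable_finset_sum _ fun i _ => integrable_finset_sum _ fun j _ => hi1 i j
    have hint2 : Integrable (fun z : (Fin n → G) × (Fin n → G) =>
        ∑ i : Fin n, ∑ j : Fin n, k (z.2 i) (z.2 j)) P :=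
      integrable_finset_sum _ fun i _ => integrable_finset_sum _ fun j _ => hi2 i j
    have hint3 : Integrable (fun z : (Fin n → G) × (Fin n → G) =>
        ∑ i : Fin n, ∑ j : Fin n, k (z.1 i) (z.2 j)) P :=
      integrable_finset_sum _ fun i _ => integrable_finset_sum _ fun j _ => hi3 i j
    have hint12 : Integrable (fun z : (Fin n → G) × (Fin n → G) =>
        (∑ i : Fin n, ∑ j : Fin n, k (z.1 i) (z.1 j))
          + ∑ i : Fin n, ∑ j : Fin n, k (z.2 i) (z.2 j)) P := hint1.add hint2
    have hint3' : Integrable (fun z : (Fin n → G) × (Fin n → G) =>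
        2 * ∑ i : Fin n, ∑ j : Fin n, k (z.1 i) (z.2 j)) P := hint3.const_mul 2
    rw [integral_sub hint12 hint3', integral_add hint1 hint2,
      integral_const_mul] at hpos
    have hsum1 : (∫ z, ∑ i : Fin n, ∑ j : Fin n, k (z.1 i) (z.1 j) ∂P)
        = (n : ℝ) * d₁ + (n : ℝ) * ((n : ℝ) - 1) * A := by
      rw [integral_finset_sum _ fun i _ => integrable_finset_sum _ fun j _ => hi1 i j]
      have : ∀ i : Fin n, (∫ z, ∑ j : Fin n, k (z.1 i) (z.1 j) ∂P)
          = d₁ + ((n : ℝ) - 1) * A := by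
        intro i
        rw [integral_finset_sum _ fun j _ => hi1 i j]
        simp_rw [hval1 i]
        have h2 : ∀ j : Fin n, (if i = j then d₁ else A)
            = A + (if i = j then d₁ - A else 0) := by
          intro j; split_ifs <;> ring
        simp_rw [h2]
        rw [Finset.sum_add_distrib, Finset.sum_const, Finset.sum_ite_eq]
        simp [Finset.card_univ]
        ring
      simp_rw [this]
      rw [Finset.sum_const, Finset.card_univ]
      simp [Fintype.card_fin]
      ring
    have hsum2 : (∫ z, ∑ i : Fin n, ∑ j : Fin n, k (z.2 i) (z.2 j) ∂P)
        = (n : ℝ) * d₂ + (n : ℝ) * ((n : ℝ) - 1) * B := by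
      rw [integral_finset_sum _ fun i _ => integrable_finset_sum _ fun j _ => hi2 i j]
      have : ∀ i : Fin n, (∫ z, ∑ j : Fin n, k (z.2 i) (z.2 j) ∂P)
          = d₂ + ((n : ℝ) - 1) * B := by
        intro i
        rw [integral_finset_sum _ fun j _ => hi2 i j]
        simp_rw [hval2 i]
        have h2 : ∀ j : Fin n, (if i = j then d₂ else B)
            = B + (if i = j then d₂ - B else 0) := by
          intro j; split_ifs <;> ring
        simp_rw [h2]
        rw [Finset.sum_add_distrib, Finset.sum_const, Finset.sum_ite_eq]
        simp [Finset.card_univ]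
        ring
      simp_rw [this]
      rw [Finset.sum_const, Finset.card_univ]
      simp [Fintype.card_fin]
      ring
    have hsum3 : (∫ z, ∑ i : Fin n, ∑ j : Fin n, k (z.1 i) (z.2 j) ∂P)
        = ((n : ℝ) * n) * D := by
      rw [integral_finset_sum _ fun i _ => integrable_finset_sum _ fun j _ => hi3 i j]
      have : ∀ i : Fin n, (∫ z, ∑ j : Fin n, k (z.1 i) (z.2 j) ∂P) = (n : ℝ) * D := by
        intro i
        rw [integral_finset_sum _ fun j _ => hi3 i j]
        simp_rw [hval3 i]
        rw [Finset.sum_const, Finset.card_univ]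
        simp [Fintype.card_fin]
      simp_rw [this]
      rw [Finset.sum_const, Finset.card_univ]
      simp [Fintype.card_fin]
      ring
    rw [hsum1, hsum2, hsum3] at hpos
    linarith
  -- conclude by letting n → ∞
  by_contra hcon
  push_neg at hcon
  set ε := 2 * D - (A + B) with hε
  have hεpos : 0 < ε := by rw [hε]; linarith
  obtain ⟨n, hn⟩ := exists_nat_gt (4 * C / ε)
  have hn0 : 0 < (n : ℝ) := lt_of_le_of_lt (div_nonneg (by linarith) hεpos.le) hn
  have h4C : 4 * C < (n : ℝ) * ε := by
    rwa [div_lt_iff₀ hεpos] at hn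
  have hmn := main n
  nlinarith [hmn, hn0, h4C, habsA, habsB, habsd₁, habsd₂,
    abs_le.1 habsA, abs_le.1 habsB, abs_le.1 habsd₁, abs_le.1 habsd₂]


open MeasureTheory

/-- HSIC equals the squared MMD between the joint distribution `P_XY` and the
product of its marginals `P_X ⊗ P_Y` under the product kernel
`k((x,y),(x',y')) = κ_X(x,x')κ_Y(y,y')`; consequently `HSIC ≥ 0`. -/
theorem hsic_eq_mmd_sq_prod_kernel_and_nonneg
    {E F : Type*} [MeasurableSpace E] [MeasurableSpace F]
    (ν : Measure (E × F)) [IsProbabilityMeasure ν]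
    (κX : E → E → ℝ) (κY : F → F → ℝ)
    (hκX_meas : Measurable (Function.uncurry κX))
    (hκY_meas : Measurable (Function.uncurry κY))
    (hκX_bdd : ∃ C : ℝ, ∀ x x', |κX x x'| ≤ C)
    (hκY_bdd : ∃ C : ℝ, ∀ y y', |κY y y'| ≤ C)
    (hκX_symm : ∀ x x', κX x x' = κX x' x)
    (hκY_symm : ∀ y y', κY y y' = κY y' y)
    (hκX_pd : ∀ (m : ℕ) (x : Fin m → E) (c : Fin m → ℝ),
      0 ≤ ∑ i : Fin m, ∑ j : Fin m, c i * c j * κX (x i) (x j))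
    (hκY_pd : ∀ (m : ℕ) (y : Fin m → F) (c : Fin m → ℝ),
      0 ≤ ∑ i : Fin m, ∑ j : Fin m, c i * c j * κY (y i) (y j))
    (Px : Measure E) (Py : Measure F)
    (hPx : Px = ν.map Prod.fst) (hPy : Py = ν.map Prod.snd)
    (hsic : ℝ)
    (hhsic : hsic
      = (∫ z₁, ∫ z₂, κX z₁.1 z₂.1 * κY z₁.2 z₂.2 ∂ν ∂ν)
        + (∫ x₁, ∫ x₂, κX x₁ x₂ ∂Px ∂Px) * (∫ y₁, ∫ y₂, κY y₁ y₂ ∂Py ∂Py)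
        - 2 * ∫ z₁, (∫ x₂, κX z₁.1 x₂ ∂Px) * (∫ y₂, κY z₁.2 y₂ ∂Py) ∂ν) :
    hsic
      = (∫ z₁, ∫ z₂, κX z₁.1 z₂.1 * κY z₁.2 z₂.2 ∂ν ∂ν)
        + (∫ z₁, ∫ z₂, κX z₁.1 z₂.1 * κY z₁.2 z₂.2 ∂(Px.prod Py) ∂(Px.prod Py))
        - 2 * ∫ z₁, ∫ z₂, κX z₁.1 z₂.1 * κY z₁.2 z₂.2 ∂(Px.prod Py) ∂ν
      ∧ 0 ≤ hsic := by
  haveI hPxP : IsProbabilityMeasure Px := by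
    rw [hPx]; exact Measure.isProbabilityMeasure_map measurable_fst.aemeasurable
  haveI hPyP : IsProbabilityMeasure Py := by
    rw [hPy]; exact Measure.isProbabilityMeasure_map measurable_snd.aemeasurable
  have hinner : ∀ z₁ : E × F, (∫ z₂, κX z₁.1 z₂.1 * κY z₁.2 z₂.2 ∂(Px.prod Py))
      = (∫ x₂, κX z₁.1 x₂ ∂Px) * ∫ y₂, κY z₁.2 y₂ ∂Py := fun z₁ =>
    integral_prod_mul (fun x => κX z₁.1 x) (fun y => κY z₁.2 y)
  have hB : (∫ z₁, ∫ z₂, κX z₁.1 z₂.1 * κY z₁.2 z₂.2 ∂(Px.prod Py) ∂(Px.prod Py))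
      = (∫ x₁, ∫ x₂, κX x₁ x₂ ∂Px ∂Px) * ∫ y₁, ∫ y₂, κY y₁ y₂ ∂Py ∂Py := by
    simp_rw [hinner]
    exact integral_prod_mul (fun x₁ => ∫ x₂, κX x₁ x₂ ∂Px) (fun y₁ => ∫ y₂, κY y₁ y₂ ∂Py)
  have hDterm : (∫ z₁, ∫ z₂, κX z₁.1 z₂.1 * κY z₁.2 z₂.2 ∂(Px.prod Py) ∂ν)
      = ∫ z₁, (∫ x₂, κX z₁.1 x₂ ∂Px) * (∫ y₂, κY z₁.2 y₂ ∂Py) ∂ν := by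
    simp_rw [hinner]
  have heq : hsic
      = (∫ z₁, ∫ z₂, κX z₁.1 z₂.1 * κY z₁.2 z₂.2 ∂ν ∂ν)
        + (∫ z₁, ∫ z₂, κX z₁.1 z₂.1 * κY z₁.2 z₂.2 ∂(Px.prod Py) ∂(Px.prod Py))
        - 2 * ∫ z₁, ∫ z₂, κX z₁.1 z₂.1 * κY z₁.2 z₂.2 ∂(Px.prod Py) ∂ν := by
    rw [hB, hDterm]; exact hhsic
  refine ⟨heq, ?_⟩
  obtain ⟨Cx, hCx⟩ := hκX_bdd
  obtain ⟨Cy, hCy⟩ := hκY_bdd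
  have hgX : Measurable fun p : (E × F) × (E × F) => (p.1.1, p.2.1) :=
    measurable_fst.fst.prodMk measurable_snd.fst
  have hgY : Measurable fun p : (E × F) × (E × F) => (p.1.2, p.2.2) :=
    measurable_fst.snd.prodMk measurable_snd.snd
  have hk : Measurable (Function.uncurry
      (fun z w : E × F => κX z.1 w.1 * κY z.2 w.2)) := by
    have h1 := hκX_meas.comp hgX
    have h2 := hκY_meas.comp hgY
    have h3 := h1.mul h2
    exact h3
  have hC : ∀ z w : E × F, |κX z.1 w.1 * κY z.2 w.2| ≤ Cx * Cy := by
    intro z w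
    rw [abs_mul]
    have h1 := hCx z.1 w.1
    have h2 := hCy z.2 w.2
    have h0 : (0:ℝ) ≤ |κX z.1 w.1| := abs_nonneg _
    exact mul_le_mul h1 h2 (abs_nonneg _) (h0.trans h1)
  have hsymm : ∀ z w : E × F, κX z.1 w.1 * κY z.2 w.2 = κX w.1 z.1 * κY w.2 z.2 := by
    intro z w
    rw [hκX_symm, hκY_symm]
  have hkey := my_key (fun z w : E × F => κX z.1 w.1 * κY z.2 w.2) hk (Cx * Cy) hC hsymm
    (my_prod_pd κX κY hκY_symm hκX_pd hκY_pd) ν (Px.prod Py)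
  rw [heq]
  linarith [hkey]
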